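/- arXiv:1707.01327 — 3 statements merged into one kernel-verified Lean document; each statement's English description precedes it below -/
import Mathlib

section
/- (Ahlfors–Schwarz lemma on the disk) Let h(t) = h₀(t) i dt∧dt̄ be a smooth hermitian metric on the unit disk Δ = {t ∈ ℂ : |t| < 1}, where h₀ > 0, and suppose its curvature satisfies i∂∂̄ log h₀(t) ≥ A·h(t) pointwise for some constant A > 0, i.e. Δlog h₀ ≥ 4A·h₀ (where Δ is the Euclidean Laplacian). Then h₀(t) ≤ (2/A)·1/(1−|t|²)² for all t ∈ Δ. -/
open Metric Filter

/-- The Euclidean Laplacian `Δu = u_xx + u_yy` of a function `u : ℂ → ℝ`. -/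
noncomputable def laplacian (u : ℂ → ℝ) (z : ℂ) : ℝ :=
  iteratedFDeriv ℝ 2 u z ![1, 1] + iteratedFDeriv ℝ 2 u z ![Complex.I, Complex.I]

lemma second_deriv_test {g : ℝ → ℝ}
    (hdiff : ∀ᶠ t in nhds (0:ℝ), DifferentiableAt ℝ g t)
    (hd2 : DifferentiableAt ℝ (deriv g) 0)
    (hmax : IsLocalMax g 0) : deriv (deriv g) 0 ≤ 0 := by
  by_contra hc
  push_neg at hc
  have h1 : deriv g 0 = 0 := hmax.deriv_eq_zero
  have h2 : HasDerivAt (deriv g) (deriv (deriv g) 0) 0 := hd2.hasDerivAt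
  rw [hasDerivAt_iff_tendsto_slope] at h2
  have h3 : ∀ᶠ t in nhdsWithin (0:ℝ) {(0:ℝ)}ᶜ, 0 < slope (deriv g) 0 t :=
    h2.eventually (eventually_gt_nhds hc)
  rw [eventually_nhdsWithin_iff] at h3
  have hall : ∀ᶠ t in nhds (0:ℝ),
      (t ∈ ({(0:ℝ)}ᶜ : Set ℝ) → 0 < slope (deriv g) 0 t) ∧ DifferentiableAt ℝ g t ∧ g t ≤ g 0 :=
    h3.and (hdiff.and hmax)
  rw [Metric.eventually_nhds_iff] at hall
  obtain ⟨ε, hε, hP⟩ := hall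
  set δ := ε / 2 with hδ
  have hδpos : 0 < δ := by positivity
  have hmem : ∀ t ∈ Set.Icc (0:ℝ) δ, dist t 0 < ε := by
    intro t ht
    rw [Real.dist_eq, sub_zero, abs_of_nonneg ht.1]
    calc t ≤ δ := ht.2
    _ < ε := by rw [hδ]; linarith
  have hcont : ContinuousOn g (Set.Icc 0 δ) :=
    fun t ht => ((hP (hmem t ht)).2.1.continuousAt).continuousWithinAt
  have hpos : ∀ t ∈ interior (Set.Icc (0:ℝ) δ), 0 < deriv g t := by
    intro t ht
    rw [interior_Icc] at ht
    have htε : dist t 0 < ε := hmem t ⟨ht.1.le, ht.2.le⟩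
    have hs := (hP htε).1 (by simpa using ht.1.ne')
    rw [slope_def_field, h1, sub_zero, sub_zero, div_pos_iff] at hs
    rcases hs with ⟨h, _⟩ | ⟨_, h⟩
    · exact h
    · linarith [ht.1]
  have hmono := strictMonoOn_of_deriv_pos (convex_Icc (0:ℝ) δ) hcont hpos
  have hlt : g 0 < g δ := hmono (Set.left_mem_Icc.2 hδpos.le) (Set.right_mem_Icc.2 hδpos.le) hδpos
  have : g δ ≤ g 0 := (hP (hmem δ (Set.right_mem_Icc.2 hδpos.le))).2.2
  linarith

lemma bridge {u : ℂ → ℝ} {s : Set ℂ} (hs : IsOpen s) (hu : ContDiffOn ℝ 2 u s)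
    {z : ℂ} (hz : z ∈ s) (v : ℂ) :
    iteratedFDeriv ℝ 2 u z ![v, v] = deriv (deriv (fun t : ℝ => u (z + t • v))) 0 ∧
    (∀ᶠ t in nhds (0:ℝ), DifferentiableAt ℝ (fun t : ℝ => u (z + t • v)) t) ∧
    DifferentiableAt ℝ (deriv (fun t : ℝ => u (z + t • v))) 0 := by
  set L : ℝ → ℂ := fun t => z + t • v with hLdef
  have hL : ∀ t : ℝ, HasDerivAt L v t := by
    intro t
    have := ((hasDerivAt_id t).smul_const v).const_add z
    simpa [hLdef] using this
  have hL0 : L 0 = z := by simp [hLdef]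
  have htend : Filter.Tendsto L (nhds 0) (nhds z) := by
    rw [← hL0]; exact (hL 0).continuousAt.tendsto
  have hmem : ∀ᶠ t in nhds (0:ℝ), L t ∈ s := htend.eventually (hs.eventually_mem hz)
  have hdiffu : DifferentiableOn ℝ u s := hu.differentiableOn (by norm_num)
  have hg' : ∀ᶠ t in nhds (0:ℝ), HasDerivAt (fun t : ℝ => u (z + t • v))
      (fderiv ℝ u (L t) v) t := by
    filter_upwards [hmem] with t ht
    exact ((hdiffu.differentiableAt (hs.mem_nhds ht)).hasFDerivAt).comp_hasDerivAt t (hL t)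
  have hdg : ∀ᶠ t in nhds (0:ℝ), DifferentiableAt ℝ (fun t : ℝ => u (z + t • v)) t :=
    hg'.mono fun t h => h.differentiableAt
  have heq : deriv (fun t : ℝ => u (z + t • v)) =ᶠ[nhds (0:ℝ)]
      fun t => fderiv ℝ u (L t) v := hg'.mono fun t h => h.deriv
  have hC1 : ContDiffOn ℝ 1 (fderiv ℝ u) s := hu.fderiv_of_isOpen hs (by norm_num)
  have hdf' : DifferentiableAt ℝ (fderiv ℝ u) z :=
    (hC1.differentiableOn one_ne_zero).differentiableAt (hs.mem_nhds hz)
  have hcomp : HasDerivAt (fun t : ℝ => fderiv ℝ u (L t)) (fderiv ℝ (fderiv ℝ u) z v) 0 := by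
    have h1 : HasFDerivAt (fderiv ℝ u) (fderiv ℝ (fderiv ℝ u) z) (L 0) := hL0 ▸ hdf'.hasFDerivAt
    exact h1.comp_hasDerivAt 0 (hL 0)
  have hG : HasDerivAt (fun t : ℝ => fderiv ℝ u (L t) v)
      (fderiv ℝ (fderiv ℝ u) z v v) 0 := by
    have := hcomp.clm_apply (hasDerivAt_const (0:ℝ) v)
    simpa using this
  refine ⟨?_, hdg, ?_⟩
  · rw [heq.deriv_eq, hG.deriv, iteratedFDeriv_two_apply]
    simp
  · exact hG.differentiableAt.congr_of_eventuallyEq heq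

lemma deriv2_log_quad (b C : ℝ) (h : b ^ 2 < C) :
    deriv (deriv (fun s : ℝ => 2 * Real.log (C - (b + s) ^ 2))) 0
      = (-4 * (C - b ^ 2) - 8 * b ^ 2) / (C - b ^ 2) ^ 2 := by
  have hQ : ∀ s : ℝ, HasDerivAt (fun s : ℝ => C - (b + s) ^ 2) (-(2 * (b + s))) s := by
    intro s
    have := (((hasDerivAt_id s).const_add b).pow 2).const_sub C
    simpa using this
  have hev : ∀ᶠ s in nhds (0:ℝ), (b + s) ^ 2 < C := by
    have ht : Filter.Tendsto (fun s : ℝ => (b + s) ^ 2) (nhds 0) (nhds (b ^ 2)) := by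
      have : ContinuousAt (fun s : ℝ => (b + s) ^ 2) 0 := by fun_prop
      simpa using this.tendsto
    exact ht.eventually_lt_const h
  have hg : ∀ s : ℝ, (b + s) ^ 2 < C →
      HasDerivAt (fun s : ℝ => 2 * Real.log (C - (b + s) ^ 2))
        (2 * (-(2 * (b + s)) / (C - (b + s) ^ 2))) s := by
    intro s hs
    exact ((hQ s).log (by linarith)).const_mul 2
  have heq : deriv (fun s : ℝ => 2 * Real.log (C - (b + s) ^ 2)) =ᶠ[nhds (0:ℝ)]
      fun s => 2 * (-(2 * (b + s)) / (C - (b + s) ^ 2)) :=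
    hev.mono fun s hs => (hg s hs).deriv
  have hn : HasDerivAt (fun s : ℝ => -(2 * (b + s))) (-2) 0 := by
    have := (((hasDerivAt_id (0:ℝ)).const_add b).const_mul 2).neg
    simp at this; exact this
  have hQ0 : C - (b + 0) ^ 2 ≠ 0 := by simp only [add_zero]; linarith
  have hG : HasDerivAt (fun s : ℝ => 2 * (-(2 * (b + s)) / (C - (b + s) ^ 2)))
      (2 * ((-2 * (C - (b + 0) ^ 2) - -(2 * (b + 0)) * -(2 * (b + 0))) / (C - (b + 0) ^ 2) ^ 2))
      0 := (HasDerivAt.div hn (hQ 0) hQ0).const_mul 2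
  rw [heq.deriv_eq, hG.deriv]
  have hd : C - b ^ 2 ≠ 0 := by linarith
  field_simp
  ring

lemma laplacian_add {u v : ℂ → ℝ} {s : Set ℂ} (hs : IsOpen s) (hu : ContDiffOn ℝ 2 u s)
    (hv : ContDiffOn ℝ 2 v s) {z : ℂ} (hz : z ∈ s) :
    laplacian (fun t => u t + v t) z = laplacian u z + laplacian v z := by
  have h : ∀ m : Fin 2 → ℂ, iteratedFDeriv ℝ 2 (fun t => u t + v t) z m
      = iteratedFDeriv ℝ 2 u z m + iteratedFDeriv ℝ 2 v z m := by
    intro m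
    rw [← iteratedFDerivWithin_of_isOpen 2 hs hz (f := u),
      ← iteratedFDerivWithin_of_isOpen 2 hs hz (f := v),
      ← iteratedFDerivWithin_of_isOpen 2 hs hz (f := fun t => u t + v t),
      iteratedFDerivWithin_add_apply' (hu z hz) (hv z hz) hs.uniqueDiffOn hz]
    rfl
  simp only [laplacian, h]
  ring

lemma laplacian_nonpos_of_localmax {u : ℂ → ℝ} {s : Set ℂ} (hs : IsOpen s)
    (hu : ContDiffOn ℝ 2 u s) {z : ℂ} (hz : z ∈ s) (hmax : IsLocalMax u z) :
    laplacian u z ≤ 0 := by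
  have key : ∀ v : ℂ, iteratedFDeriv ℝ 2 u z ![v, v] ≤ 0 := by
    intro v
    obtain ⟨heq, hdiff, hd2⟩ := bridge hs hu hz v
    rw [heq]
    apply second_deriv_test hdiff hd2
    have hc : ContinuousAt (fun t : ℝ => z + t • v) 0 := by fun_prop
    have h0 : z + (0:ℝ) • v = z := by simp
    have := (hc.tendsto.mono_right (le_of_eq (by rw [h0]))).eventually hmax
    unfold IsLocalMax IsMaxFilter
    simpa [h0] using this
  exact add_nonpos (key 1) (key Complex.I)

lemma norm_sq_eq (w : ℂ) : ‖w‖ ^ 2 = w.re ^ 2 + w.im ^ 2 := by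
  rw [Complex.sq_norm, Complex.normSq_apply]; ring

lemma contDiffOn_logmetric {r : ℝ} (hr : 0 < r) :
    ContDiffOn ℝ 2 (fun t : ℂ => 2 * Real.log (r ^ 2 - ‖t‖ ^ 2)) (ball (0:ℂ) r) := by
  have h1 : ContDiffOn ℝ 2 (fun t : ℂ => Real.log (r ^ 2 - ‖t‖ ^ 2)) (ball (0:ℂ) r) := by
    apply ContDiffOn.log ((contDiff_const.sub (contDiff_norm_sq ℝ)).contDiffOn)
    intro x hx
    rw [mem_ball_zero_iff] at hx
    have : ‖x‖ ^ 2 < r ^ 2 := by nlinarith [norm_nonneg x]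
    linarith
  exact contDiffOn_const.mul h1

lemma laplacian_log_metric {r : ℝ} (hr : 0 < r) {z : ℂ} (hz : z ∈ ball (0:ℂ) r) :
    laplacian (fun t : ℂ => 2 * Real.log (r ^ 2 - ‖t‖ ^ 2)) z
      = -8 * r ^ 2 / (r ^ 2 - ‖z‖ ^ 2) ^ 2 := by
  have hzr : ‖z‖ < r := mem_ball_zero_iff.1 hz
  have hz2 : z.re ^ 2 + z.im ^ 2 < r ^ 2 := by
    rw [← norm_sq_eq]; nlinarith [norm_nonneg z]
  have hcd := contDiffOn_logmetric hr
  obtain ⟨h1, -, -⟩ := bridge isOpen_ball hcd hz (1:ℂ)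
  obtain ⟨hI, -, -⟩ := bridge isOpen_ball hcd hz Complex.I
  have e1 : (fun t : ℝ => 2 * Real.log (r ^ 2 - ‖z + t • (1:ℂ)‖ ^ 2))
      = fun t : ℝ => 2 * Real.log ((r ^ 2 - z.im ^ 2) - (z.re + t) ^ 2) := by
    funext t
    rw [norm_sq_eq]
    simp only [Complex.add_re, Complex.add_im, Complex.real_smul, Complex.ofReal_re,
      Complex.ofReal_im, Complex.mul_re, Complex.mul_im, Complex.one_re, Complex.one_im]
    ring_nf
  have eI : (fun t : ℝ => 2 * Real.log (r ^ 2 - ‖z + t • Complex.I‖ ^ 2))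
      = fun t : ℝ => 2 * Real.log ((r ^ 2 - z.re ^ 2) - (z.im + t) ^ 2) := by
    funext t
    rw [norm_sq_eq]
    simp only [Complex.add_re, Complex.add_im, Complex.real_smul, Complex.ofReal_re,
      Complex.ofReal_im, Complex.mul_re, Complex.mul_im, Complex.I_re, Complex.I_im]
    ring_nf
  rw [laplacian, h1, hI, e1, eI, deriv2_log_quad z.re (r ^ 2 - z.im ^ 2) (by linarith),
    deriv2_log_quad z.im (r ^ 2 - z.re ^ 2) (by linarith), norm_sq_eq]
  have hD : r ^ 2 - (z.re ^ 2 + z.im ^ 2) ≠ 0 := by linarith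
  have d1 : r ^ 2 - z.im ^ 2 - z.re ^ 2 = r ^ 2 - (z.re ^ 2 + z.im ^ 2) := by ring
  have d2 : r ^ 2 - z.re ^ 2 - z.im ^ 2 = r ^ 2 - (z.re ^ 2 + z.im ^ 2) := by ring
  rw [d1, d2, ← add_div, div_eq_div_iff (pow_ne_zero 2 hD) (pow_ne_zero 2 hD)]
  ring

/-- (Ahlfors–Schwarz lemma on the disk.) If `h₀ > 0` is a smooth hermitian metric on the
unit disk whose curvature satisfies `i∂∂̄ log h₀ ≥ A·h₀·i dt∧dt̄`, i.e.
`Δ log h₀ ≥ 4A·h₀`, for some `A > 0`, then `h₀(t) ≤ (2/A)·1/(1−|t|²)²` on the disk. -/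
theorem ahlfors_schwarz_disk (h₀ : ℂ → ℝ) (A : ℝ) (hA : 0 < A)
    (hsmooth : ContDiffOn ℝ (⊤ : ℕ∞) h₀ (ball (0 : ℂ) 1))
    (hpos : ∀ t ∈ ball (0 : ℂ) 1, 0 < h₀ t)
    (hcurv : ∀ t ∈ ball (0 : ℂ) 1,
      4 * A * h₀ t ≤ laplacian (fun z => Real.log (h₀ z)) t) :
    ∀ t ∈ ball (0 : ℂ) 1, h₀ t ≤ (2 / A) * (1 / (1 - ‖t‖ ^ 2) ^ 2) := by
  intro t₀ ht₀
  have hc1 : ‖t₀‖ < 1 := mem_ball_zero_iff.1 ht₀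
  have key : ∀ r : ℝ, ‖t₀‖ < r → r < 1 →
      h₀ t₀ ≤ 2 * r ^ 2 / A / (r ^ 2 - ‖t₀‖ ^ 2) ^ 2 := by
    intro r hr0 hr1
    have hrpos : 0 < r := lt_of_le_of_lt (norm_nonneg t₀) hr0
    have hsub : closedBall (0:ℂ) r ⊆ ball (0:ℂ) 1 := closedBall_subset_ball hr1
    have hsubb : ball (0:ℂ) r ⊆ ball (0:ℂ) 1 := ball_subset_ball hr1.le
    set F : ℂ → ℝ := fun t => h₀ t * (r ^ 2 - ‖t‖ ^ 2) ^ 2 with hF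
    have hFcont : ContinuousOn F (closedBall (0:ℂ) r) := by
      apply ContinuousOn.mul ((hsmooth.continuousOn).mono hsub)
      fun_prop
    obtain ⟨t₁, ht₁mem, ht₁max⟩ := (isCompact_closedBall (0:ℂ) r).exists_isMaxOn
      ⟨0, mem_closedBall_self hrpos.le⟩ hFcont
    have ht₀r : t₀ ∈ closedBall (0:ℂ) r := by
      rw [mem_closedBall_zero_iff]; exact hr0.le
    have hD0 : 0 < r ^ 2 - ‖t₀‖ ^ 2 := by nlinarith [norm_nonneg t₀]
    have hF₀pos : 0 < F t₀ := mul_pos (hpos t₀ ht₀) (pow_pos hD0 2)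
    have hFt₁ : F t₀ ≤ F t₁ := ht₁max ht₀r
    have ht₁lt : ‖t₁‖ < r := by
      rcases lt_or_eq_of_le (mem_closedBall_zero_iff.1 ht₁mem) with h | h
      · exact h
      · exfalso
        have : F t₁ = 0 := by rw [hF]; simp [h]
        linarith
    have ht₁ball : t₁ ∈ ball (0:ℂ) r := mem_ball_zero_iff.2 ht₁lt
    have ht₁1 : t₁ ∈ ball (0:ℂ) 1 := hsubb ht₁ball
    have hu : ContDiffOn ℝ 2 (fun t => Real.log (h₀ t)) (ball (0:ℂ) r) :=
      ((hsmooth.of_le (WithTop.coe_le_coe.2 le_top)).log fun x hx => (hpos x hx).ne').mono hsubb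
    have hφ := contDiffOn_logmetric hrpos
    set w : ℂ → ℝ := fun t => Real.log (h₀ t) + 2 * Real.log (r ^ 2 - ‖t‖ ^ 2) with hw
    have hlogF : ∀ x ∈ ball (0:ℂ) r, w x = Real.log (F x) := by
      intro x hx
      have hx1 : 0 < h₀ x := hpos x (hsubb hx)
      have hx2 : 0 < r ^ 2 - ‖x‖ ^ 2 := by
        rw [mem_ball_zero_iff] at hx; nlinarith [norm_nonneg x]
      rw [hw, hF]
      simp only
      rw [Real.log_mul hx1.ne' (by positivity), Real.log_pow]
      push_cast; ring
    have hwmax : IsLocalMax w t₁ := by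
      have hball : ball (0:ℂ) r ∈ nhds t₁ := isOpen_ball.mem_nhds ht₁ball
      filter_upwards [hball] with t ht
      rw [hlogF t ht, hlogF t₁ ht₁ball]
      have hFt : 0 < F t := by
        have hx1 : 0 < h₀ t := hpos t (hsubb ht)
        have hx2 : 0 < r ^ 2 - ‖t‖ ^ 2 := by
          rw [mem_ball_zero_iff] at ht; nlinarith [norm_nonneg t]
        exact mul_pos hx1 (pow_pos hx2 2)
      exact Real.log_le_log hFt (ht₁max (ball_subset_closedBall ht))
    have hlap : laplacian w t₁ ≤ 0 :=
      laplacian_nonpos_of_localmax isOpen_ball (hu.add hφ) ht₁ball hwmax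
    have hsplit : laplacian w t₁ = laplacian (fun t => Real.log (h₀ t)) t₁ +
        laplacian (fun t : ℂ => 2 * Real.log (r ^ 2 - ‖t‖ ^ 2)) t₁ :=
      laplacian_add isOpen_ball hu hφ ht₁ball
    have hval := laplacian_log_metric hrpos ht₁ball
    have hcurv1 := hcurv t₁ ht₁1
    have hD1 : 0 < r ^ 2 - ‖t₁‖ ^ 2 := by nlinarith [norm_nonneg t₁]
    have hneg : -8 * r ^ 2 / (r ^ 2 - ‖t₁‖ ^ 2) ^ 2
        = -(8 * r ^ 2 / (r ^ 2 - ‖t₁‖ ^ 2) ^ 2) := by ring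
    have hkey : 4 * A * h₀ t₁ ≤ 8 * r ^ 2 / (r ^ 2 - ‖t₁‖ ^ 2) ^ 2 := by
      rw [hsplit, hval, hneg] at hlap
      linarith
    have hkey' : 4 * A * h₀ t₁ * (r ^ 2 - ‖t₁‖ ^ 2) ^ 2 ≤ 8 * r ^ 2 :=
      (le_div_iff₀ (pow_pos hD1 2)).1 hkey
    have hFt₁le : F t₁ ≤ 2 * r ^ 2 / A := by
      rw [hF]
      simp only
      rw [le_div_iff₀ hA]
      nlinarith
    have hF₀le : F t₀ ≤ 2 * r ^ 2 / A := le_trans hFt₁ hFt₁le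
    rw [le_div_iff₀ (pow_pos hD0 2)]
    exact hF₀le
  have hev : ∀ᶠ r in nhdsWithin (1:ℝ) (Set.Iio 1),
      h₀ t₀ ≤ 2 * r ^ 2 / A / (r ^ 2 - ‖t₀‖ ^ 2) ^ 2 := by
    have h1 : ∀ᶠ r in nhdsWithin (1:ℝ) (Set.Iio 1), ‖t₀‖ < r :=
      eventually_nhdsWithin_of_eventually_nhds (eventually_gt_nhds hc1)
    have h2 : ∀ᶠ r in nhdsWithin (1:ℝ) (Set.Iio 1), r < 1 :=
      eventually_mem_nhdsWithin.mono fun r hr => hr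
    filter_upwards [h1, h2] with r hr1 hr2
    exact key r hr1 hr2
  have hD : (0:ℝ) < 1 - ‖t₀‖ ^ 2 := by nlinarith [norm_nonneg t₀]
  have htt : Filter.Tendsto (fun r : ℝ => 2 * r ^ 2 / A / (r ^ 2 - ‖t₀‖ ^ 2) ^ 2)
      (nhdsWithin (1:ℝ) (Set.Iio 1)) (nhds (2 * 1 ^ 2 / A / (1 ^ 2 - ‖t₀‖ ^ 2) ^ 2)) := by
    apply Filter.Tendsto.mono_left _ nhdsWithin_le_nhds
    apply ContinuousAt.tendsto
    apply ContinuousAt.div (by fun_prop)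
    · fun_prop
    · have : (1:ℝ) ^ 2 - ‖t₀‖ ^ 2 = 1 - ‖t₀‖ ^ 2 := by ring
      rw [this]
      positivity
  have := ge_of_tendsto htt hev
  calc h₀ t₀ ≤ 2 * 1 ^ 2 / A / (1 ^ 2 - ‖t₀‖ ^ 2) ^ 2 := this
  _ = (2 / A) * (1 / (1 - ‖t₀‖ ^ 2) ^ 2) := by
      rw [one_pow]
      field_simp
end

section
/- (Ahlfors–Schwarz lemma on the punctured disk) Let h(t) = h₀(t) i dt∧dt̄ be a smooth hermitian metric on the punctured unit disk Δ* = {t ∈ ℂ : 0 < |t| < 1}, with h₀ > 0 and i∂∂̄ log h₀(t) ≥ A·h(t) pointwise for some constant A > 0. Then h₀(t) ≤ (2/A)·1/(|t|² (log|t|)²) for all t ∈ Δ*. -/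
open Filter Topology Real Set


/-- The punctured open unit disk in `ℂ`. -/
def puncturedDisk : Set ℂ := {t : ℂ | 0 < ‖t‖ ∧ ‖t‖ < 1}


lemma dirDeriv2 (u : ℂ → ℝ) (z v : ℂ) (hu : ContDiffAt ℝ 2 u z) :
    iteratedFDeriv ℝ 2 u z ![v, v] = deriv (deriv (fun s : ℝ => u (z + s • v))) 0 := by
  have hev : ∀ᶠ y in 𝓝 z, DifferentiableAt ℝ u y :=
    (hu.eventually (by simp)).mono fun y hy => hy.differentiableAt two_ne_zero
  set L : ℝ → ℂ := fun s => z + s • v with hLdef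
  have hLc : Continuous L := by fun_prop
  have hL0 : L 0 = z := by simp [hLdef]
  have hLd : ∀ s : ℝ, HasDerivAt L v s := fun s => by
    simpa [hLdef] using ((hasDerivAt_id s).smul_const v).const_add z
  have h1 : ∀ᶠ s in 𝓝 (0:ℝ), DifferentiableAt ℝ u (L s) := by
    have hct : ContinuousAt L 0 := hLc.continuousAt
    have : Filter.Tendsto L (nhds 0) (nhds z) := by rw [← hL0]; exact hct
    exact this.eventually hev
  have h2 : deriv (fun s : ℝ => u (z + s • v)) =ᶠ[𝓝 (0:ℝ)]
      fun s => fderiv ℝ u (L s) v := by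
    filter_upwards [h1] with s hs
    exact (hs.hasFDerivAt.comp_hasDerivAt s (hLd s)).deriv
  rw [iteratedFDeriv_two_apply]
  simp only [Matrix.cons_val_zero, Matrix.cons_val_one, Matrix.head_cons]
  rw [h2.deriv_eq]
  have hfd : DifferentiableAt ℝ (fderiv ℝ u) z :=
    (hu.fderiv_right (m := 1) (le_refl 2)).differentiableAt one_ne_zero
  have hg : HasFDerivAt (fun y => fderiv ℝ u y v)
      ((ContinuousLinearMap.apply ℝ ℝ v).comp (fderiv ℝ (fderiv ℝ u) z)) z :=
    (ContinuousLinearMap.apply ℝ ℝ v).hasFDerivAt.comp z hfd.hasFDerivAt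
  have : HasDerivAt (fun s : ℝ => fderiv ℝ u (L s) v)
      (fderiv ℝ (fderiv ℝ u) z v v) 0 := by
    have hg' : HasFDerivAt (fun y => fderiv ℝ u y v)
        ((ContinuousLinearMap.apply ℝ ℝ v).comp (fderiv ℝ (fderiv ℝ u) z)) (L 0) := by
      rw [hL0]; exact hg
    have := hg'.comp_hasDerivAt (f := L) 0 (hLd 0)
    exact this
  exact this.deriv.symm


lemma deriv2_nonpos_of_isLocalMax {φ : ℝ → ℝ}
    (hd : ∀ᶠ s in 𝓝 (0:ℝ), DifferentiableAt ℝ φ s) (hmax : IsLocalMax φ 0) :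
    deriv (deriv φ) 0 ≤ 0 := by
  by_contra h
  push_neg at h
  -- deriv φ 0 = 0
  have hp0 : deriv φ 0 = 0 := hmax.deriv_eq_zero
  have hdd : DifferentiableAt ℝ (deriv φ) 0 := by
    by_contra hcon
    rw [deriv_zero_of_not_differentiableAt hcon] at h
    exact lt_irrefl 0 h
  have hslope : Tendsto (slope (deriv φ) 0) (𝓝[≠] (0:ℝ)) (𝓝 (deriv (deriv φ) 0)) :=
    hasDerivAt_iff_tendsto_slope.1 hdd.hasDerivAt
  have hpos : ∀ᶠ s in 𝓝[≠] (0:ℝ), 0 < slope (deriv φ) 0 s :=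
    hslope.eventually (eventually_gt_nhds h)
  -- get radii
  obtain ⟨δ₁, hδ₁, H₁⟩ := Metric.eventually_nhds_iff.1 (eventually_nhdsWithin_iff.1 hpos)
  obtain ⟨δ₂, hδ₂, H₂⟩ := Metric.eventually_nhds_iff.1 hd
  obtain ⟨δ₃, hδ₃, H₃⟩ := Metric.eventually_nhds_iff.1 (hmax : ∀ᶠ s in 𝓝 (0:ℝ), φ s ≤ φ 0)
  set δ : ℝ := min δ₁ (min δ₂ δ₃) / 2 with hδdef
  have hδpos : 0 < δ := by positivity
  have hδ1 : δ < δ₁ := by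
    have : δ ≤ δ₁ / 2 := by
      apply div_le_div_of_nonneg_right ?_ ?_ <;> [skip; norm_num]
      exact min_le_left _ _
    linarith
  have hδ2 : δ < δ₂ := by
    have : δ ≤ δ₂ / 2 := by
      apply div_le_div_of_nonneg_right ?_ ?_ <;> [skip; norm_num]
      exact (min_le_right _ _).trans (min_le_left _ _)
    linarith
  have hδ3 : δ < δ₃ := by
    have : δ ≤ δ₃ / 2 := by
      apply div_le_div_of_nonneg_right ?_ ?_ <;> [skip; norm_num]
      exact (min_le_right _ _).trans (min_le_right _ _)
    linarith
  -- φ strictly monotone on [0, δ]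
  have hmono : StrictMonoOn φ (Icc 0 δ) := by
    apply strictMonoOn_of_deriv_pos (convex_Icc 0 δ)
    · intro x hx
      refine (H₂ ?_).continuousAt.continuousWithinAt
      rw [Real.dist_eq, sub_zero, abs_of_nonneg hx.1]
      exact lt_of_le_of_lt hx.2 hδ2
    · intro x hx
      rw [interior_Icc] at hx
      have hx0 : x ≠ 0 := ne_of_gt hx.1
      have hxd : dist x 0 < δ₁ := by
        rw [Real.dist_eq, sub_zero, abs_of_pos hx.1]; exact lt_trans hx.2 hδ1
      have := H₁ hxd (by simpa using hx0)
      rw [slope_def_field, hp0, sub_zero, sub_zero] at this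
      have := mul_pos this hx.1
      rwa [div_mul_cancel₀] at this
      exact hx0
  have : φ 0 < φ δ := hmono (by constructor <;> [rfl; positivity]) ⟨le_of_lt hδpos, le_rfl⟩ hδpos
  have : φ δ ≤ φ 0 := H₃ (by rw [Real.dist_eq, sub_zero, abs_of_pos hδpos]; exact hδ3)
  linarith

lemma laplacian_nonpos_of_isLocalMax {u : ℂ → ℝ} {z₀ : ℂ}
    (hu : ContDiffAt ℝ 2 u z₀) (hmax : IsLocalMax u z₀) : laplacian u z₀ ≤ 0 := by
  have key : ∀ v : ℂ, iteratedFDeriv ℝ 2 u z₀ ![v, v] ≤ 0 := by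
    intro v
    rw [dirDeriv2 u z₀ v hu]
    have hLd : ∀ s : ℝ, HasDerivAt (fun s : ℝ => z₀ + s • v) v s := fun s => by
      simpa using ((hasDerivAt_id s).smul_const v).const_add z₀
    have hLt : Tendsto (fun s : ℝ => z₀ + s • v) (𝓝 0) (𝓝 z₀) := by
      have h := ((hLd 0).continuousAt)
      unfold ContinuousAt at h
      simpa using h
    apply deriv2_nonpos_of_isLocalMax
    · have hev : ∀ᶠ y in 𝓝 z₀, DifferentiableAt ℝ u y :=
        (hu.eventually (by simp)).mono fun y hy => hy.differentiableAt two_ne_zero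
      filter_upwards [hLt.eventually hev] with s hs
      exact hs.comp s (hLd s).differentiableAt
    · have : ∀ᶠ s in 𝓝 (0:ℝ), u (z₀ + s • v) ≤ u z₀ := hLt.eventually hmax
      simpa [IsLocalMax, IsMaxFilter] using this
  have h1 := key 1
  have h2 := key Complex.I
  unfold laplacian
  linarith

lemma iteratedFDeriv2_add (u₁ u₂ : ℂ → ℝ) (z : ℂ)
    (h₁ : ContDiffAt ℝ 2 u₁ z) (h₂ : ContDiffAt ℝ 2 u₂ z) (m : Fin 2 → ℂ) :
    iteratedFDeriv ℝ 2 (fun w => u₁ w + u₂ w) z m =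
      iteratedFDeriv ℝ 2 u₁ z m + iteratedFDeriv ℝ 2 u₂ z m := by
  rw [iteratedFDeriv_two_apply, iteratedFDeriv_two_apply, iteratedFDeriv_two_apply]
  have h₁ev : ∀ᶠ y in 𝓝 z, DifferentiableAt ℝ u₁ y :=
    (h₁.eventually (by simp)).mono fun y hy => hy.differentiableAt two_ne_zero
  have h₂ev : ∀ᶠ y in 𝓝 z, DifferentiableAt ℝ u₂ y :=
    (h₂.eventually (by simp)).mono fun y hy => hy.differentiableAt two_ne_zero
  have hev : (fun y => fderiv ℝ (fun w => u₁ w + u₂ w) y) =ᶠ[𝓝 z]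
      fun y => fderiv ℝ u₁ y + fderiv ℝ u₂ y := by
    filter_upwards [h₁ev, h₂ev] with y hy₁ hy₂
    exact fderiv_add hy₁ hy₂
  rw [hev.fderiv_eq]
  have hd1 : DifferentiableAt ℝ (fderiv ℝ u₁) z :=
    (h₁.fderiv_right (m := 1) (le_refl 2)).differentiableAt one_ne_zero
  have hd2 : DifferentiableAt ℝ (fderiv ℝ u₂) z :=
    (h₂.fderiv_right (m := 1) (le_refl 2)).differentiableAt one_ne_zero
  rw [fderiv_fun_add hd1 hd2]
  simp

lemma laplacian_add_s4 (u₁ u₂ : ℂ → ℝ) (z : ℂ)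
    (h₁ : ContDiffAt ℝ 2 u₁ z) (h₂ : ContDiffAt ℝ 2 u₂ z) :
    laplacian (fun w => u₁ w + u₂ w) z = laplacian u₁ z + laplacian u₂ z := by
  unfold laplacian
  rw [iteratedFDeriv2_add u₁ u₂ z h₁ h₂, iteratedFDeriv2_add u₁ u₂ z h₁ h₂]
  ring

lemma deriv2_radial_line (p β : ℝ) (hn : 0 < p^2 + β^2)
    (ψ ψ' ψ'' : ℝ → ℝ) (U : Set ℝ) (hU : IsOpen U) (hq0 : Real.log (p^2+β^2) / 2 ∈ U)
    (hd1 : ∀ y ∈ U, HasDerivAt ψ (ψ' y) y)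
    (hd2 : ∀ y ∈ U, HasDerivAt ψ' (ψ'' y) y) :
    deriv (deriv (fun s : ℝ => ψ (Real.log ((p+s)^2 + β^2) / 2))) 0 =
      (ψ'' (Real.log (p^2+β^2) / 2) * p^2
        + ψ' (Real.log (p^2+β^2) / 2) * (β^2 - p^2)) / (p^2+β^2)^2 := by
  set n : ℝ → ℝ := fun s => (p+s)^2 + β^2 with hndef
  set q : ℝ → ℝ := fun s => Real.log (n s) / 2 with hqdef
  have hn0 : n 0 = p^2 + β^2 := by simp [hndef]
  have hq0' : q 0 = Real.log (p^2+β^2) / 2 := by rw [hqdef]; simp [hn0]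
  have hnc : Continuous n := by fun_prop
  have hnpos : ∀ᶠ s in 𝓝 (0:ℝ), 0 < n s := by
    have : Tendsto n (𝓝 0) (𝓝 (n 0)) := hnc.continuousAt
    rw [hn0] at this
    exact this.eventually (eventually_gt_nhds hn)
  have hqU : ∀ᶠ s in 𝓝 (0:ℝ), q s ∈ U := by
    have hqc : ContinuousAt q 0 := by
      apply ContinuousAt.div_const
      exact (Real.continuousAt_log (by rw [hn0]; positivity)).comp hnc.continuousAt
    have : Tendsto q (𝓝 0) (𝓝 (q 0)) := hqc
    rw [hq0'] at this
    exact this.eventually (hU.eventually_mem hq0)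
  have hnd : ∀ s : ℝ, HasDerivAt n (2*(p+s)) s := fun s => by
    have h1 : HasDerivAt (fun s : ℝ => (p+s)^2) (2*(p+s)) s := by
      have := ((hasDerivAt_id s).const_add p).fun_pow 2
      simpa [mul_comm] using this
    exact h1.add_const (β^2)
  have hqd : ∀ s : ℝ, 0 < n s → HasDerivAt q ((p+s)/n s) s := by
    intro s hs
    have hl : HasDerivAt (fun s => Real.log (n s)) ((n s)⁻¹ * (2*(p+s))) s :=
      (Real.hasDerivAt_log (ne_of_gt hs)).comp s (hnd s)
    have := hl.div_const 2
    refine this.congr_deriv ?_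
    ring
  -- first derivative
  have hderiv1 : deriv (fun s : ℝ => ψ (q s)) =ᶠ[𝓝 (0:ℝ)]
      fun s => ψ' (q s) * ((p+s)/n s) := by
    filter_upwards [hnpos, hqU] with s hs hsU
    exact ((hd1 _ hsU).comp s (hqd s hs)).deriv
  rw [show (fun s : ℝ => ψ (Real.log ((p+s)^2 + β^2) / 2)) = fun s => ψ (q s) from rfl]
  rw [hderiv1.deriv_eq]
  -- second derivative at 0
  have hq00 : 0 < n 0 := by rw [hn0]; exact hn
  have hg1 : HasDerivAt (fun s => ψ' (q s)) (ψ'' (q 0) * ((p+0)/n 0)) 0 :=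
    (hd2 _ (by rw [hq0']; exact hq0)).comp 0 (hqd 0 hq00)
  have hg2 : HasDerivAt (fun s : ℝ => (p+s)/n s)
      ((1 * n 0 - (p+0) * (2*(p+0))) / (n 0)^2) 0 := by
    exact (((hasDerivAt_id 0).const_add p)).div (hnd 0) (ne_of_gt hq00)
  have := (hg1.fun_mul hg2).deriv
  rw [this]
  rw [hq0', hn0]
  have hne : (p^2+β^2) ≠ 0 := ne_of_gt hn
  field_simp
  ring

lemma log_norm_eq (w : ℂ) : Real.log ‖w‖ = Real.log (w.re^2 + w.im^2) / 2 := by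
  rw [Complex.norm_def, Real.log_sqrt (Complex.normSq_nonneg w)]
  congr 2
  rw [Complex.normSq_apply]; ring


lemma laplacian_radial (ψ ψ' ψ'' : ℝ → ℝ) (U : Set ℝ) (hU : IsOpen U)
    (z : ℂ) (hz : 0 < z.re^2 + z.im^2) (hzU : Real.log ‖z‖ ∈ U)
    (hd1 : ∀ y ∈ U, HasDerivAt ψ (ψ' y) y) (hd2 : ∀ y ∈ U, HasDerivAt ψ' (ψ'' y) y)
    (hC : ContDiffAt ℝ 2 (fun w => ψ (Real.log ‖w‖)) z) :
    laplacian (fun w => ψ (Real.log ‖w‖)) z = ψ'' (Real.log ‖z‖) / (z.re^2 + z.im^2) := by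
  have hzU' : Real.log (z.re^2 + z.im^2) / 2 ∈ U := by rw [← log_norm_eq]; exact hzU
  have hzU'' : Real.log (z.im^2 + z.re^2) / 2 ∈ U := by rw [add_comm (z.im^2)]; exact hzU'
  unfold laplacian
  rw [dirDeriv2 _ _ _ hC, dirDeriv2 _ _ _ hC]
  have e1 : (fun s : ℝ => ψ (Real.log ‖z + s • (1:ℂ)‖))
      = fun s => ψ (Real.log ((z.re + s)^2 + z.im^2) / 2) := by
    funext s
    rw [log_norm_eq]
    simp [Complex.add_re, Complex.add_im]
  have e2 : (fun s : ℝ => ψ (Real.log ‖z + s • Complex.I‖))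
      = fun s => ψ (Real.log ((z.im + s)^2 + z.re^2) / 2) := by
    funext s
    rw [log_norm_eq]
    rw [show (z + s • Complex.I).re = z.re by simp, show (z + s • Complex.I).im = z.im + s by simp]
    rw [add_comm ((z.im+s)^2)]
  rw [e1, e2]
  rw [deriv2_radial_line z.re z.im hz ψ ψ' ψ'' U hU hzU' hd1 hd2]
  rw [deriv2_radial_line z.im z.re (by linarith) ψ ψ' ψ'' U hU hzU'' hd1 hd2]
  rw [show Real.log (z.im^2 + z.re^2) = Real.log (z.re^2 + z.im^2) by rw [add_comm]]
  rw [← log_norm_eq]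
  have hne : z.re^2 + z.im^2 ≠ 0 := ne_of_gt hz
  rw [show (z.im ^ 2 + z.re ^ 2) = (z.re^2 + z.im^2) by ring, ← add_div]
  have hnum : ψ'' (Real.log ‖z‖) * z.re ^ 2 + ψ' (Real.log ‖z‖) * (z.im ^ 2 - z.re ^ 2)
      + (ψ'' (Real.log ‖z‖) * z.im ^ 2 + ψ' (Real.log ‖z‖) * (z.re ^ 2 - z.im ^ 2))
      = ψ'' (Real.log ‖z‖) * (z.re^2 + z.im^2) := by ring
  rw [hnum]
  field_simp


lemma norm_sq_eq' (z : ℂ) : ‖z‖^2 = z.re^2 + z.im^2 := by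
  rw [Complex.sq_norm, Complex.normSq_apply]; ring

set_option maxHeartbeats 2000000 in
/-- (Ahlfors–Schwarz lemma on the punctured disk.) If `h₀ > 0` is a smooth hermitian
metric on the punctured unit disk with `i∂∂̄ log h₀ ≥ A·h₀·i dt∧dt̄`, i.e.
`Δ log h₀ ≥ 4A·h₀`, for some `A > 0`, then `h₀(t) ≤ (2/A)·1/(|t|²(log|t|)²)`. -/
theorem ahlfors_schwarz_punctured_disk (h₀ : ℂ → ℝ) (A : ℝ) (hA : 0 < A)
    (hsmooth : ContDiffOn ℝ (⊤ : ℕ∞) h₀ puncturedDisk)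
    (hpos : ∀ t ∈ puncturedDisk, 0 < h₀ t)
    (hcurv : ∀ t ∈ puncturedDisk,
      4 * A * h₀ t ≤ laplacian (fun z => Real.log (h₀ z)) t) :
    ∀ t ∈ puncturedDisk,
      h₀ t ≤ (2 / A) * (1 / (‖t‖ ^ 2 * Real.log ‖t‖ ^ 2)) := by
  have hPDopen : IsOpen puncturedDisk := by
    have : puncturedDisk = (fun z : ℂ => ‖z‖) ⁻¹' (Ioo 0 1) := rfl
    rw [this]
    exact isOpen_Ioo.preimage continuous_norm
  intro t ht
  obtain ⟨ht0, ht1⟩ := ht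
  set lr : ℝ := Real.log ‖t‖ with hlrdef
  have hlr : lr < 0 := Real.log_neg ht0 ht1
  set La : ℝ := 2 * lr with hLadef
  set Lb : ℝ := lr / 8 with hLbdef
  have hLab : Lb - La = -(15/8) * lr := by rw [hLadef, hLbdef]; ring
  have hLabpos : 0 < Lb - La := by rw [hLab]; nlinarith
  have hLb0 : Lb < 0 := by rw [hLbdef]; linarith
  set c : ℝ := Real.pi / (Lb - La) with hcdef
  have hc : 0 < c := div_pos Real.pi_pos hLabpos
  have hcLab : c * (Lb - La) = Real.pi := by
    rw [hcdef]; field_simp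
  set θ : ℂ → ℝ := fun z => c * (Lb - Real.log ‖z‖) with hθdef
  set G : ℂ → ℝ := fun z => ‖z‖^2 * Real.sin (θ z)^2 with hGdef
  set F : ℂ → ℝ := fun z => h₀ z * G z with hFdef
  set ea : ℝ := Real.exp La with headef
  set eb : ℝ := Real.exp Lb with hebdef
  have hea : 0 < ea := Real.exp_pos _
  have heb1 : eb < 1 := Real.exp_lt_one_iff.2 hLb0
  set K : Set ℂ := {z : ℂ | ea ≤ ‖z‖ ∧ ‖z‖ ≤ eb} with hKdef
  set Ω : Set ℂ := {z : ℂ | ea < ‖z‖ ∧ ‖z‖ < eb} with hΩdef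
  have hKsub : K ⊆ puncturedDisk := fun z hz =>
    ⟨lt_of_lt_of_le hea hz.1, lt_of_le_of_lt hz.2 heb1⟩
  have hΩK : Ω ⊆ K := fun z hz => ⟨le_of_lt hz.1, le_of_lt hz.2⟩
  have hΩopen : IsOpen Ω := by
    have : Ω = (fun z : ℂ => ‖z‖) ⁻¹' (Ioo ea eb) := rfl
    rw [this]; exact isOpen_Ioo.preimage continuous_norm
  -- log bounds on Ω
  have hlogΩ : ∀ z ∈ Ω, La < Real.log ‖z‖ ∧ Real.log ‖z‖ < Lb := by
    intro z hz
    constructor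
    · have := Real.log_lt_log hea hz.1
      rwa [Real.log_exp] at this
    · have := Real.log_lt_log (lt_trans hea hz.1) hz.2
      rwa [Real.log_exp] at this
  have hθΩ : ∀ z ∈ Ω, 0 < θ z ∧ θ z < Real.pi := by
    intro z hz
    obtain ⟨h1, h2⟩ := hlogΩ z hz
    constructor
    · apply mul_pos hc; linarith
    · calc c * (Lb - Real.log ‖z‖) < c * (Lb - La) := by
            apply mul_lt_mul_of_pos_left _ hc; linarith
        _ = Real.pi := hcLab
  have hsinΩ : ∀ z ∈ Ω, 0 < Real.sin (θ z) := fun z hz =>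
    Real.sin_pos_of_pos_of_lt_pi (hθΩ z hz).1 (hθΩ z hz).2
  have hGΩ : ∀ z ∈ Ω, 0 < G z := by
    intro z hz
    have hn : 0 < ‖z‖ := lt_trans hea hz.1
    have := hsinΩ z hz
    rw [hGdef]; positivity
  -- t ∈ Ω
  have htnorm : ‖t‖ = Real.exp lr := (Real.exp_log ht0).symm
  have htΩ : t ∈ Ω := by
    constructor
    · rw [htnorm, headef]; exact Real.exp_lt_exp.2 (by linarith)
    · rw [htnorm, hebdef]; exact Real.exp_lt_exp.2 (by linarith)
  -- K compact
  have hKclosed : IsClosed K := by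
    have : K = (fun z : ℂ => ‖z‖) ⁻¹' (Icc ea eb) := rfl
    rw [this]; exact isClosed_Icc.preimage continuous_norm
  have hKbdd : Bornology.IsBounded K := by
    apply (Metric.isBounded_closedBall (x := (0:ℂ)) (r := eb)).subset
    intro z hz
    simpa [Metric.mem_closedBall] using hz.2
  have hKcompact : IsCompact K := Metric.isCompact_of_isClosed_isBounded hKclosed hKbdd
  -- F continuous on K
  have hFcont : ContinuousOn F K := by
    apply ContinuousOn.mul
    · exact (hsmooth.continuousOn).mono hKsub
    · apply ContinuousOn.mul
      · exact (continuous_norm.pow 2).continuousOn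
      · apply ContinuousOn.pow
        apply Real.continuous_sin.comp_continuousOn
        apply ContinuousOn.mul continuousOn_const
        apply ContinuousOn.sub continuousOn_const
        intro z hz
        exact (Real.continuousAt_log (ne_of_gt (lt_of_lt_of_le hea hz.1))).comp
          continuous_norm.continuousAt |>.continuousWithinAt
  obtain ⟨z₀, hz₀K, hz₀max'⟩ := hKcompact.exists_isMaxOn ⟨t, hΩK htΩ⟩ hFcont
  have hz₀max : ∀ z ∈ K, F z ≤ F z₀ := fun z hz => hz₀max' hz
  have hFt : 0 < F t := by
    have := hpos t ⟨ht0, ht1⟩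
    have := hGΩ t htΩ
    rw [hFdef]; positivity
  have hFz₀ : 0 < F z₀ := lt_of_lt_of_le hFt (hz₀max t (hΩK htΩ))
  -- z₀ ∈ Ω
  have hz₀Ω : z₀ ∈ Ω := by
    have hGz₀ : 0 < G z₀ := by
      by_contra h
      push_neg at h
      have : F z₀ ≤ 0 := by
        rw [hFdef]
        have h₀pos := hpos z₀ (hKsub hz₀K)
        exact mul_nonpos_of_nonneg_of_nonpos (le_of_lt h₀pos) h
      linarith
    have hsinz₀ : Real.sin (θ z₀) ≠ 0 := by
      intro h
      rw [hGdef] at hGz₀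
      simp only [h] at hGz₀
      nlinarith [hGz₀]
    constructor
    · rcases lt_or_eq_of_le hz₀K.1 with h | h
      · exact h
      · exfalso
        apply hsinz₀
        have : Real.log ‖z₀‖ = La := by rw [← h, headef, Real.log_exp]
        rw [hθdef]
        simp only
        rw [this]
        rw [show c * (Lb - La) = Real.pi from hcLab]
        exact Real.sin_pi
    · rcases lt_or_eq_of_le hz₀K.2 with h | h
      · exact h
      · exfalso
        apply hsinz₀
        have : Real.log ‖z₀‖ = Lb := by rw [h, hebdef, Real.log_exp]
        rw [hθdef]
        simp only
        rw [this, sub_self, mul_zero]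
        exact Real.sin_zero
  -- ψ and its derivatives
  set U : Set ℝ := Ioo La Lb with hUdef
  have hUopen : IsOpen U := isOpen_Ioo
  set ψ : ℝ → ℝ := fun s => 2*s + 2*Real.log (Real.sin (c*(Lb - s))) with hψdef
  set ψ' : ℝ → ℝ := fun s => 2 - 2*c*(Real.cos (c*(Lb - s))/Real.sin (c*(Lb - s))) with hψ'def
  set ψ'' : ℝ → ℝ := fun s => -(2*c^2/(Real.sin (c*(Lb - s)))^2) with hψ''def
  have hsinU : ∀ y ∈ U, 0 < Real.sin (c*(Lb - y)) := by
    intro y hy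
    apply Real.sin_pos_of_pos_of_lt_pi
    · apply mul_pos hc; linarith [hy.2]
    · calc c * (Lb - y) < c*(Lb - La) := by
            apply mul_lt_mul_of_pos_left _ hc; linarith [hy.1]
        _ = Real.pi := hcLab
  have hinner : ∀ y : ℝ, HasDerivAt (fun s : ℝ => c*(Lb - s)) (c * (-1)) y := by
    intro y
    exact ((hasDerivAt_id y).const_sub Lb).const_mul c
  have hsinD : ∀ y : ℝ, HasDerivAt (fun s : ℝ => Real.sin (c*(Lb - s)))
      (Real.cos (c*(Lb - y)) * (c * (-1))) y := fun y =>
    ((Real.hasDerivAt_sin (c*(Lb - y))).comp y (hinner y) :)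
  have hd1 : ∀ y ∈ U, HasDerivAt ψ (ψ' y) y := by
    intro y hy
    have hlog : HasDerivAt (fun s : ℝ => Real.log (Real.sin (c*(Lb - s))))
        ((Real.sin (c*(Lb - y)))⁻¹ * (Real.cos (c*(Lb - y)) * (c * (-1)))) y :=
      ((Real.hasDerivAt_log (ne_of_gt (hsinU y hy))).comp y (hsinD y) :)
    have h2s : HasDerivAt (fun s : ℝ => 2*s) 2 y := by
      simpa using (hasDerivAt_id y).const_mul 2
    have hsum := h2s.fun_add (hlog.const_mul 2)
    refine hsum.congr_deriv ?_
    rw [hψ'def]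
    have hs := ne_of_gt (hsinU y hy)
    field_simp
    ring
  have hd2 : ∀ y ∈ U, HasDerivAt ψ' (ψ'' y) y := by
    intro y hy
    have hs := hsinU y hy
    have hcosD : HasDerivAt (fun s : ℝ => Real.cos (c*(Lb - s)))
        (-Real.sin (c*(Lb - y)) * (c * (-1))) y :=
      ((Real.hasDerivAt_cos (c*(Lb - y))).comp y (hinner y) :)
    have hq := hcosD.fun_div (hsinD y) (ne_of_gt hs)
    have hfull := (hq.const_mul (2*c)).const_sub 2
    refine hfull.congr_deriv ?_
    rw [hψ''def]
    have hpy := Real.sin_sq_add_cos_sq (c*(Lb - y))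
    have hsne := ne_of_gt hs
    field_simp
    nlinarith [hpy]
  -- smoothness at z₀
  have hz₀PD : z₀ ∈ puncturedDisk := hKsub hz₀K
  have hz₀pos : 0 < ‖z₀‖ := hz₀PD.1
  have hz₀U : Real.log ‖z₀‖ ∈ U := by
    rw [hUdef, mem_Ioo]; exact hlogΩ z₀ hz₀Ω
  have hu₁C : ContDiffAt ℝ 2 (fun z => Real.log (h₀ z)) z₀ := by
    have h1 : ContDiffAt ℝ 2 h₀ z₀ :=
      (hsmooth.contDiffAt (hPDopen.mem_nhds hz₀PD)).of_le (WithTop.coe_le_coe.2 le_top)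
    exact h1.log (ne_of_gt (hpos z₀ hz₀PD))
  have hlogC : ContDiffAt ℝ 2 (fun z : ℂ => Real.log ‖z‖) z₀ := by
    have he : (fun z : ℂ => Real.log ‖z‖) = fun z => Real.log (z.re^2 + z.im^2) / 2 :=
      funext log_norm_eq
    rw [he]
    have hr1 : ContDiff ℝ 2 (fun z : ℂ => z.re) := Complex.reCLM.contDiff
    have hr2 : ContDiff ℝ 2 (fun z : ℂ => z.im) := Complex.imCLM.contDiff
    have hre : ContDiffAt ℝ 2 (fun z : ℂ => z.re^2 + z.im^2) z₀ :=
      ((hr1.pow 2).add (hr2.pow 2)).contDiffAt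
    have hne : (z₀.re^2 + z₀.im^2) ≠ 0 := by
      have h := norm_sq_eq' z₀; nlinarith [hz₀pos]
    exact (hre.log hne).div_const 2
  have hu₂C : ContDiffAt ℝ 2 (fun z : ℂ => ψ (Real.log ‖z‖)) z₀ := by
    have hψC : ContDiffAt ℝ 2 ψ (Real.log ‖z₀‖) := by
      rw [hψdef]
      have hsinne : Real.sin (c*(Lb - Real.log ‖z₀‖)) ≠ 0 :=
        ne_of_gt (hsinU _ hz₀U)
      have h1 : ContDiffAt ℝ 2 (fun s : ℝ => c*(Lb - s)) (Real.log ‖z₀‖) := by fun_prop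
      have h2 : ContDiffAt ℝ 2 (fun s : ℝ => Real.sin (c*(Lb - s))) (Real.log ‖z₀‖) :=
        (Real.contDiff_sin.of_le le_top).contDiffAt.comp _ h1
      have h3 := h2.log hsinne
      exact (contDiffAt_const.mul contDiffAt_id).add (contDiffAt_const.mul h3)
    exact hψC.comp z₀ hlogC
  -- local max of w at z₀
  set w : ℂ → ℝ := fun z => Real.log (h₀ z) + ψ (Real.log ‖z‖) with hwdef
  have hwmax : IsLocalMax w z₀ := by
    have hwF : ∀ z ∈ Ω, w z = Real.log (F z) := by
      intro z hz
      have hz' : z ∈ puncturedDisk := hKsub (hΩK hz)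
      have hh := hpos z hz'
      have hn : 0 < ‖z‖ := hz'.1
      have hsin := hsinΩ z hz
      rw [hwdef, hFdef, hGdef]
      simp only
      rw [Real.log_mul (ne_of_gt hh) (by positivity),
          Real.log_mul (by positivity) (by positivity),
          Real.log_pow, Real.log_pow, hψdef]
      push_cast
      ring
    filter_upwards [hΩopen.mem_nhds hz₀Ω] with z hz
    rw [hwF z hz, hwF z₀ hz₀Ω]
    apply Real.log_le_log
    · rw [hFdef]
      exact mul_pos (hpos z (hKsub (hΩK hz))) (hGΩ z hz)
    · exact hz₀max z (hΩK hz)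
  have hwlap : laplacian w z₀ ≤ 0 := laplacian_nonpos_of_isLocalMax (hu₁C.add hu₂C) hwmax
  have hsplit : laplacian w z₀ = laplacian (fun z => Real.log (h₀ z)) z₀
      + laplacian (fun z : ℂ => ψ (Real.log ‖z‖)) z₀ := laplacian_add_s4 _ _ z₀ hu₁C hu₂C
  have hz₀sq : 0 < z₀.re^2 + z₀.im^2 := by
    have h := norm_sq_eq' z₀; nlinarith [hz₀pos]
  have hrad := laplacian_radial ψ ψ' ψ'' U hUopen z₀ hz₀sq hz₀U hd1 hd2 hu₂C
  have hNeq : z₀.re^2 + z₀.im^2 = ‖z₀‖^2 := (norm_sq_eq' z₀).symm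
  have hsz₀ : 0 < Real.sin (θ z₀) := hsinΩ z₀ hz₀Ω
  have hθz₀ : Real.sin (c * (Lb - Real.log ‖z₀‖)) = Real.sin (θ z₀) := rfl
  have hlapu₂ : laplacian (fun z : ℂ => ψ (Real.log ‖z‖)) z₀
      = -(2*c^2 / ((Real.sin (θ z₀))^2 * ‖z₀‖^2)) := by
    rw [hrad, hNeq, hψ''def]
    simp only [hθz₀]
    rw [neg_div, div_div]
  have hcz₀ := hcurv z₀ hz₀PD
  have hfin0 : 4*A*h₀ z₀ ≤ 2*c^2/((Real.sin (θ z₀))^2 * ‖z₀‖^2) := by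
    rw [hsplit, hlapu₂] at hwlap
    linarith
  -- F z₀ ≤ c²/(2A)
  have hh₀z₀ := hpos z₀ hz₀PD
  have hFz₀le : F z₀ ≤ c^2/(2*A) := by
    have hD : 0 < (Real.sin (θ z₀))^2 * ‖z₀‖^2 := by positivity
    have h1 : 4*A*h₀ z₀ * ((Real.sin (θ z₀))^2 * ‖z₀‖^2) ≤ 2*c^2 :=
      (le_div_iff₀ hD).1 hfin0
    rw [hFdef, hGdef, le_div_iff₀ (by positivity : (0:ℝ) < 2*A)]
    simp only
    have e : 4*A*h₀ z₀ * ((Real.sin (θ z₀))^2 * ‖z₀‖^2)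
        = (h₀ z₀ * (‖z₀‖^2 * Real.sin (θ z₀)^2) * (2*A)) * 2 := by ring
    linarith [h1, e ▸ h1]
  have hFtle : F t ≤ c^2/(2*A) := le_trans (hz₀max t (hΩK htΩ)) hFz₀le
  -- θ t = 7π/15
  have hlrne : lr ≠ 0 := ne_of_lt hlr
  have hθt : θ t = 7*Real.pi/15 := by
    rw [hθdef]
    simp only [← hlrdef]
    rw [hcdef, hLab, hLbdef]
    field_simp
    ring
  have hsin34 : 3/4 ≤ Real.sin (θ t)^2 := by
    rw [hθt]
    have h1 : Real.sin (Real.pi/3) ≤ Real.sin (7*Real.pi/15) := by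
      apply Real.strictMonoOn_sin.monotoneOn
      · constructor <;> nlinarith [Real.pi_pos]
      · constructor <;> nlinarith [Real.pi_pos]
      · nlinarith [Real.pi_pos]
    have h3 : (0:ℝ) ≤ Real.sin (Real.pi/3) := by
      rw [Real.sin_pi_div_three]; positivity
    have h4 : Real.sin (Real.pi/3)^2 = 3/4 := Real.sq_sin_pi_div_three
    nlinarith [h1, h3, h4]
  have hc2 : c^2 * lr^2 = 64*Real.pi^2/225 := by
    rw [hcdef, hLab]
    field_simp
    ring
  have hpi2 : Real.pi^2 < 10 := by nlinarith [Real.pi_lt_d2, Real.pi_pos]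
  have hNt : (0:ℝ) < ‖t‖^2 := by positivity
  have hh₀t := hpos t ⟨ht0, ht1⟩
  have hlr2 : 0 < lr^2 := by positivity
  have hkey2 : h₀ t * (‖t‖^2 * lr^2) * A ≤ 2 := by
    have h1 : h₀ t * (‖t‖^2 * Real.sin (θ t)^2) * (2*A) ≤ c^2 := by
      have h := mul_le_mul_of_nonneg_right hFtle
        (le_of_lt (by positivity : (0:ℝ) < 2*A))
      rw [div_mul_cancel₀ _ (by positivity : (2*A) ≠ 0)] at h
      rw [hFdef, hGdef] at h
      exact h
    have h2 := mul_le_mul_of_nonneg_right h1 (le_of_lt hlr2)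
    rw [hc2] at h2
    have e1 : h₀ t * (‖t‖^2 * Real.sin (θ t)^2) * (2*A) * lr^2
        = (h₀ t * (‖t‖^2*lr^2) * A) * (2 * Real.sin (θ t)^2) := by ring
    rw [e1] at h2
    have hx0 : 0 ≤ h₀ t * (‖t‖^2*lr^2) * A := by positivity
    have h3 : (h₀ t * (‖t‖^2*lr^2) * A) * (3/2)
        ≤ (h₀ t * (‖t‖^2*lr^2) * A) * (2 * Real.sin (θ t)^2) :=
      mul_le_mul_of_nonneg_left (by linarith) hx0
    linarith
  rw [div_mul_div_comm, le_div_iff₀ (by positivity : (0:ℝ) < A * (‖t‖^2 * lr^2))]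
  have : h₀ t * (A * (‖t‖^2 * lr^2)) = h₀ t * (‖t‖^2 * lr^2) * A := by ring
  rw [this, mul_one]
  exact hkey2
end

section
/- Let h₀ be a smooth positive function on the unit disk Δ achieving at an interior point t₀ a maximum of the ratio h₀(t)·(1−|t|²)². If i∂∂̄ log h₀ ≥ A·h₀·i dt∧dt̄ on Δ with A > 0, then h₀(t₀)·(1−|t₀|²)² ≤ 2/A. -/
open Metric
open Filter Topology Set

lemma second_deriv_test_max {g G : ℝ → ℝ} {d : ℝ}
    (h : ∀ᶠ s in 𝓝 (0:ℝ), HasDerivAt g (G s) s)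
    (hG : HasDerivAt G d 0) (hmax : IsLocalMax g 0) : d ≤ 0 := by
  by_contra hd
  push_neg at hd
  have hG0 : G 0 = 0 := by
    rw [← h.self_of_nhds.deriv]; exact hmax.deriv_eq_zero
  have hslope : Tendsto (fun s => G s / s) (𝓝[≠] (0:ℝ)) (𝓝 d) := by
    refine (hasDerivAt_iff_tendsto_slope.1 hG).congr fun s => ?_
    simp [slope_def_field, hG0]
  have hpos : ∀ᶠ s in 𝓝[>] (0:ℝ), 0 < G s := by
    have h1 : ∀ᶠ s in 𝓝[≠] (0:ℝ), 0 < G s / s :=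
      hslope.eventually (eventually_gt_nhds hd)
    have h2 : ∀ᶠ s in 𝓝[>] (0:ℝ), 0 < G s / s :=
      h1.filter_mono (nhdsWithin_mono _ fun y hy => ne_of_gt hy)
    filter_upwards [h2, self_mem_nhdsWithin] with s hs hs'
    have : (0:ℝ) < (G s / s) * s := mul_pos hs hs'
    rwa [div_mul_cancel₀] at this
    exact ne_of_gt hs'
  obtain ⟨ε, hε, hIoo⟩ := mem_nhdsGT_iff_exists_Ioo_subset.1 hpos
  rw [mem_Ioi] at hε
  obtain ⟨δ, hδ, hball⟩ := Metric.eventually_nhds_iff.1 (h.and hmax)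
  set b := min ε δ / 2 with hb_def
  have hb : 0 < b := by positivity
  have hbε : b < ε := by
    have := min_le_left ε δ; simp only [hb_def]; linarith
  have hbδ : b < δ := by
    have := min_le_right ε δ; simp only [hb_def]; linarith
  have hsub : ∀ x ∈ Icc (0:ℝ) b, dist x 0 < δ := by
    intro x hx
    rw [Real.dist_eq, sub_zero, abs_of_nonneg hx.1]
    exact lt_of_le_of_lt hx.2 hbδ
  have hcont : ContinuousOn g (Icc (0:ℝ) b) := fun x hx =>
    ((hball (hsub x hx)).1.continuousAt).continuousWithinAt
  have hderiv : ∀ x ∈ interior (Icc (0:ℝ) b), 0 < deriv g x := by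
    intro x hx
    rw [interior_Icc] at hx
    have hGx : 0 < G x := hIoo ⟨hx.1, lt_trans hx.2 hbε⟩
    have : deriv g x = G x := ((hball (hsub x ⟨hx.1.le, hx.2.le⟩)).1).deriv
    rwa [this]
  have hmono := strictMonoOn_of_deriv_pos (convex_Icc 0 b) hcont hderiv
  have h01 : g 0 < g b := hmono ⟨le_refl 0, hb.le⟩ ⟨hb.le, le_refl b⟩ hb
  have : g b ≤ g 0 := (hball (by rw [Real.dist_eq, sub_zero, abs_of_nonneg hb.le]; exact hbδ)).2
  linarith


set_option maxHeartbeats 1000000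

/-- (Maximum-principle step of the Ahlfors–Schwarz lemma.) If a smooth positive `h₀` on
the unit disk achieves at an interior point `t₀` a maximum of the ratio
`h₀(t)·(1−|t|²)²`, and `i∂∂̄ log h₀ ≥ A·h₀·i dt∧dt̄` (i.e. `Δ log h₀ ≥ 4A·h₀`) on the
disk for some `A > 0`, then `h₀(t₀)·(1−|t₀|²)² ≤ 2/A`. -/
theorem ahlfors_schwarz_maximum_step (h₀ : ℂ → ℝ) (A : ℝ) (hA : 0 < A)
    (hsmooth : ContDiffOn ℝ (⊤ : ℕ∞) h₀ (ball (0 : ℂ) 1))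
    (hpos : ∀ t ∈ ball (0 : ℂ) 1, 0 < h₀ t)
    (hcurv : ∀ t ∈ ball (0 : ℂ) 1,
      4 * A * h₀ t ≤ laplacian (fun z => Real.log (h₀ z)) t)
    (t₀ : ℂ) (ht₀ : t₀ ∈ ball (0 : ℂ) 1)
    (hmax : ∀ t ∈ ball (0 : ℂ) 1,
      h₀ t * (1 - ‖t‖ ^ 2) ^ 2 ≤ h₀ t₀ * (1 - ‖t₀‖ ^ 2) ^ 2) :
    h₀ t₀ * (1 - ‖t₀‖ ^ 2) ^ 2 ≤ 2 / A := by
  set u : ℂ → ℝ := fun z => Real.log (h₀ z) with hu_def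
  set c : ℝ := 1 - ‖t₀‖ ^ 2 with hc_def
  have hnt₀ : ‖t₀‖ < 1 := mem_ball_zero_iff.1 ht₀
  have hc : 0 < c := by
    have := norm_nonneg t₀
    nlinarith
  have hu : ContDiffOn ℝ (⊤ : ℕ∞) u (ball (0:ℂ) 1) :=
    hsmooth.log (fun t ht => (hpos t ht).ne')
  have hdiffu : ∀ w ∈ ball (0:ℂ) 1, DifferentiableAt ℝ u w := fun w hw =>
    ((hu.differentiableOn (by simp)) w hw).differentiableAt (isOpen_ball.mem_nhds hw)
  have hfd : DifferentiableAt ℝ (fderiv ℝ u) t₀ := by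
    have hcu : ContDiffAt ℝ 2 u t₀ :=
      (hu.contDiffAt (isOpen_ball.mem_nhds ht₀)).of_le (by exact WithTop.coe_le_coe.2 le_top)
    exact (hcu.fderiv_right (le_refl _)).differentiableAt one_ne_zero
  set B := fderiv ℝ (fderiv ℝ u) t₀ with hB_def
  -- the key per-direction estimate
  have key : ∀ (v : ℂ) (a : ℝ),
      (∀ s : ℝ, ‖t₀ + s • v‖ ^ 2 = ‖t₀‖ ^ 2 + 2 * a * s + s ^ 2) →
      B v v ≤ (4 * c + 8 * a ^ 2) / c ^ 2 := by
    intro v a hva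
    set L : ℝ → ℂ := fun s => t₀ + s • v with hL_def
    have hL : ∀ s, HasDerivAt L v s := by
      intro s
      have := ((hasDerivAt_id s).smul_const v).const_add t₀
      simpa [hL_def] using this
    have hL0 : L 0 = t₀ := by simp [hL_def]
    set q : ℝ → ℝ := fun s => c - 2 * a * s - s ^ 2 with hq_def
    have hq : ∀ s, q s = 1 - ‖L s‖ ^ 2 := by
      intro s
      simp only [hq_def, hL_def, hva s, hc_def]
      ring
    have hq0 : q 0 = c := by simp [hq_def]
    have hqd : ∀ s, HasDerivAt q (-(2 * a) - 2 * s) s := by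
      intro s
      have h1 : HasDerivAt (fun y : ℝ => c - 2 * a * y - y ^ 2) (-(2*a) - 2*s) s := by
        have h2 := (((hasDerivAt_id' (x := s)).const_mul (2*a)).const_sub c).sub
          (hasDerivAt_pow 2 s)
        refine h2.congr_deriv ?_
        simp
      exact h1
    have hmem : ∀ᶠ s in 𝓝 (0:ℝ), L s ∈ ball (0:ℂ) 1 := by
      have hcont : ContinuousAt L 0 := (hL 0).continuousAt
      have := hcont.preimage_mem_nhds (isOpen_ball.mem_nhds (hL0 ▸ ht₀))
      filter_upwards [this] with s hs using hs
    have hqpos : ∀ᶠ s in 𝓝 (0:ℝ), 0 < q s := by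
      filter_upwards [hmem] with s hs
      rw [hq s]
      have := mem_ball_zero_iff.1 hs
      nlinarith [norm_nonneg (L s)]
    set g : ℝ → ℝ := fun s => u (L s) + 2 * Real.log (q s) with hg_def
    set G : ℝ → ℝ := fun s => (fderiv ℝ u (L s)) v + (-(4*a) - 4*s) / q s with hG_def
    have hEv : ∀ᶠ s in 𝓝 (0:ℝ), HasDerivAt g (G s) s := by
      filter_upwards [hmem, hqpos] with s hs hqs
      have h1 : HasDerivAt (fun s => u (L s)) (fderiv ℝ u (L s) v) s :=
        ((hdiffu _ hs).hasFDerivAt).comp_hasDerivAt s (hL s)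
      have h2 : HasDerivAt (fun s => Real.log (q s)) ((-(2*a) - 2*s) / q s) s :=
        (hqd s).log hqs.ne'
      have h3 := h1.add (h2.const_mul 2)
      refine h3.congr_deriv ?_
      simp only [hG_def]
      field_simp
      ring
    have hGd : HasDerivAt G (B v v + ((-4) * c - (-(4*a)) * (-(2*a))) / c ^ 2) 0 := by
      have hA1 : HasFDerivAt (fun w => fderiv ℝ u w v)
          ((ContinuousLinearMap.apply ℝ ℝ v).comp B) t₀ :=
        (ContinuousLinearMap.apply ℝ ℝ v).hasFDerivAt.comp t₀ hfd.hasFDerivAt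
      rw [← hL0] at hA1
      have h1 : HasDerivAt (fun s => fderiv ℝ u (L s) v) (B v v) 0 := by
        have := hA1.comp_hasDerivAt 0 (hL 0)
        exact this
      have hn : HasDerivAt (fun s : ℝ => -(4*a) - 4*s) (-4 : ℝ) 0 := by
        have := ((hasDerivAt_id (0:ℝ)).const_mul 4).const_sub (-(4*a))
        refine this.congr_deriv ?_
        ring
      have hq0' : q 0 ≠ 0 := by rw [hq0]; exact hc.ne'
      have h2 := hn.div (hqd 0) hq0'
      have h3 := h1.add h2
      refine h3.congr_deriv ?_
      rw [hq0]
      ring_nf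
    have hmaxg : IsLocalMax g 0 := by
      filter_upwards [hmem, hqpos] with s hs hqs
      have hL0mem : t₀ ∈ ball (0:ℂ) 1 := ht₀
      have e1 : g s = Real.log (h₀ (L s) * (1 - ‖L s‖ ^ 2) ^ 2) := by
        rw [Real.log_mul (hpos _ hs).ne' (pow_ne_zero 2 (by rw [← hq s]; exact hqs.ne')), Real.log_pow]
        simp [hg_def, hu_def, hq s]
      have e2 : g 0 = Real.log (h₀ t₀ * c ^ 2) := by
        rw [Real.log_mul (hpos _ ht₀).ne' (pow_ne_zero 2 hc.ne'), Real.log_pow]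
        simp [hg_def, hu_def, hq0, hL0]
      rw [e1, e2]
      apply Real.log_le_log (mul_pos (hpos _ hs) (pow_pos (hq s ▸ hqs) 2))
      exact hmax (L s) hs
    have hle := second_deriv_test_max hEv hGd hmaxg
    have harr : ((-4) * c - (-(4*a)) * (-(2*a))) / c ^ 2 = -((4*c + 8*a^2) / c^2) := by
      ring
    rw [harr] at hle
    linarith
  -- instantiate in the two coordinate directions
  have hre : ∀ s : ℝ, ‖t₀ + s • (1:ℂ)‖ ^ 2 = ‖t₀‖ ^ 2 + 2 * t₀.re * s + s ^ 2 := by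
    intro s
    simp only [Complex.sq_norm, Complex.normSq_apply, Complex.add_re,
      Complex.add_im, Complex.real_smul, Complex.mul_re, Complex.mul_im, Complex.ofReal_re, Complex.ofReal_im,
      Complex.one_re, Complex.one_im]
    ring
  have him : ∀ s : ℝ, ‖t₀ + s • Complex.I‖ ^ 2 = ‖t₀‖ ^ 2 + 2 * t₀.im * s + s ^ 2 := by
    intro s
    simp only [Complex.sq_norm, Complex.normSq_apply, Complex.add_re,
      Complex.add_im, Complex.real_smul, Complex.mul_re, Complex.mul_im, Complex.ofReal_re, Complex.ofReal_im,
      Complex.I_re, Complex.I_im]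
    ring
  have k1 := key 1 t₀.re hre
  have k2 := key Complex.I t₀.im him
  have hxy : t₀.re ^ 2 + t₀.im ^ 2 = ‖t₀‖ ^ 2 := by
    rw [Complex.sq_norm, Complex.normSq_apply]
    ring
  have hlap : laplacian u t₀ = B 1 1 + B Complex.I Complex.I := by
    simp only [laplacian, iteratedFDeriv_two_apply, hB_def]
    simp [Matrix.cons_val_zero, Matrix.cons_val_one, Matrix.head_cons]
  have hcurv' := hcurv t₀ ht₀
  rw [hlap] at hcurv'
  have hsum : (4*c + 8*t₀.re^2)/c^2 + (4*c + 8*t₀.im^2)/c^2 = 8 / c^2 := by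
    rw [← add_div]
    congr 1
    linarith [hxy, hc_def]
  have hfin : 4 * A * h₀ t₀ ≤ 8 / c ^ 2 := by
    calc 4 * A * h₀ t₀ ≤ B 1 1 + B Complex.I Complex.I := hcurv'
      _ ≤ (4*c + 8*t₀.re^2)/c^2 + (4*c + 8*t₀.im^2)/c^2 := add_le_add k1 k2
      _ = 8 / c^2 := hsum
  have hc2 : (0:ℝ) < c ^ 2 := by positivity
  have h9 := (le_div_iff₀ hc2).1 hfin
  rw [le_div_iff₀ hA]
  nlinarith [h9]
end
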